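/- arXiv:1402.1561 — 2 statements merged into one kernel-verified Lean document; each statement's English description precedes it below -/
import Mathlib

section
/- Let e, f, g ∈ ℤ² satisfy e = f + g, ‖e‖ ≥ max{‖f‖, ‖g‖}, and det(f,g) = 1. Then ⟨f,g⟩ ≥ 0 (i.e. (f,g) is the unique direct acute basis summing to e). -/
/-- Vectors of `ℤ²`. -/
abbrev V : Type := ℤ × ℤ

/-- Determinant of two vectors of `ℤ²`. -/
def det2 (f g : V) : ℤ := f.1 * g.2 - f.2 * g.1

/-- Standard inner product on `ℤ²`. -/
def dot (f g : V) : ℤ := f.1 * g.1 + f.2 * g.2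

/-- Squared euclidean norm on `ℤ²`. -/
def nsq (e : V) : ℤ := e.1 ^ 2 + e.2 ^ 2

/-- A vector of `ℤ²` is irreducible iff its coordinates are coprime. -/
def Irred (e : V) : Prop := Int.gcd e.1 e.2 = 1

/-- `(f, g)` are the parents of `e` : they form a direct acute basis summing to `e`. -/
def IsParents (f g e : V) : Prop := e = f + g ∧ det2 f g = 1 ∧ 0 ≤ dot f g

/-- `f` is a parent of `e`. -/
def IsParent (f e : V) : Prop := ∃ g : V, IsParents f g e ∨ IsParents g f e

/-- Embedding of `ℤ²` into `ℝ²`. -/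
def toR (e : V) : ℝ × ℝ := ((e.1 : ℝ), (e.2 : ℝ))

/-! If `⟨f,g⟩ = p < 0`, then `‖f + g‖² ≥ ‖f‖², ‖g‖²` forces `‖f‖², ‖g‖² ≥ -2p`, while Lagrange's
identity gives `‖f‖² ‖g‖² = p² + det(f,g)² = p² + 1`; hence `4p² ≤ p² + 1`, impossible for a
nonzero integer `p`. -/

lemma nsq_nonneg (f : V) : 0 ≤ nsq f := by
  unfold nsq; positivity

lemma nsq_add (f g : V) : nsq (f + g) = nsq f + 2 * dot f g + nsq g := by
  simp only [nsq, dot, Prod.fst_add, Prod.snd_add]; ring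

lemma nsq_mul_nsq (f g : V) : nsq f * nsq g = dot f g ^ 2 + det2 f g ^ 2 := by
  simp only [nsq, dot, det2]; ring

lemma three_mul_dot_sq_le_det2_sq {f g : V} (hf : nsq f ≤ nsq (f + g))
    (hg : nsq g ≤ nsq (f + g)) (hobtuse : dot f g ≤ 0) :
    3 * dot f g ^ 2 ≤ det2 f g ^ 2 := by
  rw [nsq_add] at hf hg
  have hprod : (-2 * dot f g) * (-2 * dot f g) ≤ nsq f * nsq g :=
    mul_le_mul (by linarith) (by linarith) (by linarith) (nsq_nonneg f)
  rw [nsq_mul_nsq] at hprod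
  linarith

/-- If `e = f + g`, `‖e‖ ≥ max {‖f‖, ‖g‖}` and `det (f,g) = 1`, then `⟨f,g⟩ ≥ 0`. -/
theorem sum_parents_acute (e f g : V) (he : e = f + g)
    (hf : nsq f ≤ nsq e) (hg : nsq g ≤ nsq e) (hd : det2 f g = 1) :
    0 ≤ dot f g := by
  subst he
  by_contra! hneg
  have h := three_mul_dot_sq_le_det2_sq hf hg hneg.le
  rw [hd] at h
  nlinarith
end

section
/- Let Ω ⊂ ℝ² be convex, X = Ω ∩ ℤ², and let p, q, r, z ∈ X with z = αp + βq + γr for positive reals α, β, γ summing to 1, such that p, q, r are not collinear and the triangle [p,q,r] intersects X exactly in {p,q,r,z}. Then α = β = γ = 1/3 and, up to permuting p, q, r, there is an irreducible e ∈ ℤ² with ‖e‖ > 1, of parents f, g, such that p = z+e, q = z−f, r = z−g. -/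
/-!
Write the vertices as `z + a`, `z + b`, `z + c`. Taking determinants in `α a + β b + γ c = 0`
gives `α det(c, a) = β det(b, c)` and `α det(a, b) = γ det(b, c)`, so the three determinants
have one sign and the point `z` splits `[p, q, r]` into three lattice triangles of the same
orientation. A lattice triangle `[0, u, v]` with `det(u, v) ≥ 2` contains a lattice point other
than its vertices (reduce a point of `ℤ² ∖ (ℤu + ℤv)` modulo `ℤu + ℤv`), so each of the three
determinants is `±1`; hence `α = β = γ = 1/3` and `a + b + c = 0`. Of three such vectors some
two, say `b` and `c`, have `⟨b, c⟩ ≥ 0`, and then `-b`, `-c` are the parents of `a`.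
-/

lemma det2_swap (u v : V) : det2 v u = -det2 u v := by
  simp only [det2]; ring

@[simp] lemma det2_self (u : V) : det2 u u = 0 := by
  simp only [det2]; ring

@[simp] lemma det2_zero_left (u : V) : det2 0 u = 0 := by
  simp [det2]

@[simp] lemma det2_zero_right (u : V) : det2 u 0 = 0 := by
  simp [det2]

lemma det2_sq_add_dot_sq (f g : V) : det2 f g ^ 2 + dot f g ^ 2 = nsq f * nsq g := by
  simp only [det2, dot, nsq]; ring

lemma smul_det2_eq (u v w : V) : det2 u v • w = det2 w v • u + det2 u w • v := by
  ext <;> simp only [det2, Prod.smul_fst, Prod.smul_snd, Prod.fst_add, Prod.snd_add, smul_eq_mul]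
    <;> ring

lemma det2_sub_smul_sub_smul (u v w : V) (m n : ℤ) :
    det2 (w - m • u - n • v) v = det2 w v - m * det2 u v ∧
      det2 u (w - m • u - n • v) = det2 u w - n * det2 u v := by
  constructor <;> simp only [det2, Prod.fst_sub, Prod.snd_sub, Prod.smul_fst, Prod.smul_snd,
    smul_eq_mul] <;> ring

lemma exists_not_dvd_det2 {u v : V} (h : 2 ≤ det2 u v) :
    ∃ w : V, ¬(det2 u v ∣ det2 w v ∧ det2 u v ∣ det2 u w) := by
  by_contra! hdvd
  obtain ⟨hv₂, hu₂⟩ := hdvd (1, 0)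
  obtain ⟨hv₁, hu₁⟩ := hdvd (0, 1)
  simp only [det2, one_mul, zero_mul, sub_zero, zero_sub, mul_one, mul_zero, dvd_neg]
    at hv₁ hv₂ hu₁ hu₂
  have hsq : det2 u v * det2 u v ∣ det2 u v * 1 := by
    rw [mul_one]
    exact dvd_sub (mul_dvd_mul hu₁ hv₂) (mul_dvd_mul hu₂ hv₁)
  have := Int.le_of_dvd one_pos ((mul_dvd_mul_iff_left (by omega)).1 hsq)
  omega

-- A lattice point outside `ℤu + ℤv`, reduced into the half-open parallelogram spanned by `u`, `v`.
lemma exists_mem_parallelogram_of_two_le_det2 {u v : V} (h : 2 ≤ det2 u v) :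
    ∃ w : V, 0 ≤ det2 w v ∧ det2 w v < det2 u v ∧ 0 ≤ det2 u w ∧ det2 u w < det2 u v ∧
      (det2 w v ≠ 0 ∨ det2 u w ≠ 0) := by
  obtain ⟨w, hw⟩ := exists_not_dvd_det2 h
  have hD : 0 < det2 u v := by omega
  obtain ⟨hs, ht⟩ := det2_sub_smul_sub_smul u v w (det2 w v / det2 u v) (det2 u w / det2 u v)
  rw [mul_comm, ← Int.emod_def] at hs ht
  refine ⟨w - (det2 w v / det2 u v) • u - (det2 u w / det2 u v) • v, ?_⟩
  rw [hs, ht]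
  refine ⟨?_, ?_, ?_, ?_, ?_⟩
  · exact Int.emod_nonneg _ hD.ne'
  · exact Int.emod_lt_of_pos _ hD
  · exact Int.emod_nonneg _ hD.ne'
  · exact Int.emod_lt_of_pos _ hD
  · by_contra! h0
    exact hw ⟨Int.dvd_of_emod_eq_zero h0.1, Int.dvd_of_emod_eq_zero h0.2⟩

-- The three inequalities on `w` say that `w` lies in the triangle `[0, u, v]`.
lemma exists_mem_triangle_of_two_le_det2 {u v : V} (h : 2 ≤ det2 u v) :
    ∃ w : V, 0 ≤ det2 w v ∧ 0 ≤ det2 u w ∧ det2 w v + det2 u w ≤ det2 u v ∧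
      w ≠ 0 ∧ w ≠ u ∧ w ≠ v := by
  obtain ⟨w, hs₀, hs₁, ht₀, ht₁, hst⟩ := exists_mem_parallelogram_of_two_le_det2 h
  by_cases hle : det2 w v + det2 u w ≤ det2 u v
  · refine ⟨w, hs₀, ht₀, hle, ?_, ?_, ?_⟩ <;> rintro rfl <;> simp at *
  · -- the reflection `u + v - w` of `w` through the centre of the parallelogram
    have hs : det2 (u + v - w) v = det2 u v - det2 w v := by
      simp only [det2, Prod.fst_sub, Prod.snd_sub, Prod.fst_add, Prod.snd_add]; ring
    have ht : det2 u (u + v - w) = det2 u v - det2 u w := by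
      simp only [det2, Prod.fst_sub, Prod.snd_sub, Prod.fst_add, Prod.snd_add]; ring
    refine ⟨u + v - w, by omega, by omega, by omega, ?_, ?_, ?_⟩ <;> intro h0 <;>
      rw [h0] at hs ht <;> simp at hs ht <;> omega

lemma det2_eq_of_add_add_eq_zero {a b c : V} (h : a + b + c = 0) :
    det2 c a = det2 b c ∧ det2 a b = det2 b c := by
  have hc : c = -a - b := by linear_combination h
  subst hc
  constructor <;> simp only [det2, Prod.fst_sub, Prod.snd_sub, Prod.fst_neg, Prod.snd_neg] <;> ring

-- Otherwise `t := dot b c ≤ -1`, `nsq b + t ≥ 1` and `nsq c + t ≥ 1`, against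
-- `1 + t ^ 2 = nsq b * nsq c` (Lagrange's identity).
lemma exists_dot_nonneg {a b c : V} (h : a + b + c = 0) (hbc : det2 b c = 1) :
    0 ≤ dot b c ∨ 0 ≤ dot c a ∨ 0 ≤ dot a b := by
  by_contra! hdot
  have ha : a = -b - c := by linear_combination h
  subst ha
  have hlag := det2_sq_add_dot_sq b c
  simp only [det2, dot, nsq, Prod.fst_sub, Prod.snd_sub, Prod.fst_neg, Prod.snd_neg] at *
  nlinarith

lemma isParents_neg_neg {a b c : V} (h : a + b + c = 0) (hbc : det2 b c = 1)
    (hdot : 0 ≤ dot b c) : IsParents (-b) (-c) a := by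
  refine ⟨by linear_combination h, ?_, ?_⟩
  · simpa [det2] using hbc
  · simpa [dot] using hdot

lemma exists_isParents_perm {a b c : V} (h : a + b + c = 0) (hbc : det2 b c = 1) :
    ∃ e f g : V, IsParents f g e ∧ [e, -f, -g].Perm [a, b, c] := by
  obtain ⟨hca, hab⟩ := det2_eq_of_add_add_eq_zero h
  rcases exists_dot_nonneg h hbc with hdot | hdot | hdot
  · exact ⟨a, -b, -c, isParents_neg_neg h hbc hdot, by simp⟩
  · refine ⟨b, -c, -a, isParents_neg_neg (by linear_combination h) (hca.trans hbc) hdot, ?_⟩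
    simpa using List.rotate_perm [a, b, c] 1
  · refine ⟨c, -a, -b, isParents_neg_neg (by linear_combination h) (hab.trans hbc) hdot, ?_⟩
    simpa using List.rotate_perm [a, b, c] 2

lemma IsParents.irred {f g e : V} (h : IsParents f g e) : Irred e := by
  obtain ⟨rfl, hdet, -⟩ := h
  refine Int.isCoprime_iff_gcd_eq_one.1 ⟨-f.2, f.1, ?_⟩
  simp only [det2] at hdet
  simp only [Prod.fst_add, Prod.snd_add]
  linear_combination hdet

lemma IsParents.one_lt_nsq {f g e : V} (h : IsParents f g e) : 1 < nsq e := by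
  obtain ⟨rfl, hdet, hdot⟩ := h
  have hlag := det2_sq_add_dot_sq f g
  have hf : 0 ≤ nsq f := by simp only [nsq]; positivity
  have hg : 0 ≤ nsq g := by simp only [nsq]; positivity
  have hsum : nsq (f + g) = nsq f + nsq g + 2 * dot f g := by
    simp only [nsq, dot, Prod.fst_add, Prod.snd_add]; ring
  rw [hdet] at hlag
  nlinarith

lemma toR_add (u v : V) : toR (u + v) = toR u + toR v := by
  ext <;> simp [toR]

lemma toR_neg (u : V) : toR (-u) = -toR u := by
  ext <;> simp [toR]

lemma toR_zsmul (k : ℤ) (u : V) : toR (k • u) = (k : ℝ) • toR u := by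
  ext <;> simp [toR]

lemma toR_injective : Function.Injective toR := by
  intro u v h
  simp only [toR, Prod.mk.injEq, Int.cast_inj] at h
  exact Prod.ext h.1 h.2

lemma Convex.smul_add_smul_add_smul_mem {E : Type*} [AddCommGroup E] [Module ℝ E] {T : Set E}
    (hT : Convex ℝ T) {x y z : E} (hx : x ∈ T) (hy : y ∈ T) (hz : z ∈ T) {a b c : ℝ}
    (ha : 0 ≤ a) (hb : 0 ≤ b) (hc : 0 ≤ c) (habc : a + b + c = 1) :
    a • x + b • y + c • z ∈ T := by
  have := hT.sum_mem (t := Finset.univ) (w := ![a, b, c]) (z := ![x, y, z])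
    (by intro i _; fin_cases i <;> simpa) (by simpa [Fin.sum_univ_three] using habc)
    (by intro i _; fin_cases i <;> simpa)
  simpa [Fin.sum_univ_three] using this

lemma add_toR_mem_of_det2 {T : Set (ℝ × ℝ)} (hT : Convex ℝ T) {x : ℝ × ℝ} {u v w : V}
    (hx : x ∈ T) (hu : x + toR u ∈ T) (hv : x + toR v ∈ T) (hD : 0 < det2 u v)
    (hs : 0 ≤ det2 w v) (ht : 0 ≤ det2 u w) (hst : det2 w v + det2 u w ≤ det2 u v) :
    x + toR w ∈ T := by
  have hD' : (0 : ℝ) < det2 u v := by exact_mod_cast hD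
  obtain ⟨μ, ν, hμ, hν, hμν, hw⟩ : ∃ μ ν : ℝ, 0 ≤ μ ∧ 0 ≤ ν ∧ μ + ν ≤ 1 ∧
      toR w = μ • toR u + ν • toR v := by
    refine ⟨det2 w v / det2 u v, det2 u w / det2 u v, by positivity, by positivity, ?_, ?_⟩
    · rw [← add_div, div_le_one hD']
      exact_mod_cast hst
    · have := congrArg toR (smul_det2_eq u v w)
      rw [toR_zsmul, toR_add, toR_zsmul, toR_zsmul] at this
      rw [div_eq_inv_mul, div_eq_inv_mul, mul_smul, mul_smul, ← smul_add, ← this, smul_smul,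
        inv_mul_cancel₀ hD'.ne', one_smul]
  convert hT.smul_add_smul_add_smul_mem hx hu hv (by linarith : 0 ≤ 1 - μ - ν) hμ hν (by ring)
    using 1
  rw [hw]
  module

lemma det2_eq_one_of_convex {T : Set (ℝ × ℝ)} (hT : Convex ℝ T) {x : ℝ × ℝ} {a b c : V}
    (hx : x ∈ T) (hb : x + toR b ∈ T) (hc : x + toR c ∈ T)
    (hempty : ∀ w : V, x + toR w ∈ T → w = a ∨ w = b ∨ w = c ∨ w = 0)
    (hbc : 0 < det2 b c) (hca : 0 < det2 c a) : det2 b c = 1 := by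
  by_contra hne
  obtain ⟨w, hs, ht, hst, hw0, hwb, hwc⟩ :=
    exists_mem_triangle_of_two_le_det2 (by omega : 2 ≤ det2 b c)
  rcases hempty w (add_toR_mem_of_det2 hT hx hb hc hbc hs ht hst) with rfl | rfl | rfl | rfl
  · rw [det2_swap] at hs
    omega
  · exact hwb rfl
  · exact hwc rfl
  · exact hw0 rfl

lemma mul_det2_eq_of_smul_add_smul_add_smul {a b c : V} {α β γ : ℝ}
    (h : α • toR a + β • toR b + γ • toR c = 0) :
    α * det2 c a = β * det2 b c ∧ α * det2 a b = γ * det2 b c := by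
  have h₁ := congrArg Prod.fst h
  have h₂ := congrArg Prod.snd h
  simp only [toR, Prod.fst_add, Prod.snd_add, Prod.smul_fst, Prod.smul_snd, smul_eq_mul,
    Prod.fst_zero, Prod.snd_zero] at h₁ h₂
  constructor <;> push_cast [det2]
  · linear_combination (c.1 : ℝ) * h₂ - (c.2 : ℝ) * h₁
  · linear_combination (b.2 : ℝ) * h₁ - (b.1 : ℝ) * h₂

lemma weights_eq_third_of_det2_pos (x : ℝ × ℝ) {a b c : V} {α β γ : ℝ}
    (hα : 0 < α) (hβ : 0 < β) (hγ : 0 < γ) (hsum : α + β + γ = 1)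
    (hbary : α • toR a + β • toR b + γ • toR c = 0) (hbc : 0 < det2 b c)
    (hempty : ∀ w : V, x + toR w ∈ convexHull ℝ {x + toR a, x + toR b, x + toR c} →
      w = a ∨ w = b ∨ w = c ∨ w = 0) :
    α = 1 / 3 ∧ β = 1 / 3 ∧ γ = 1 / 3 ∧ a + b + c = 0 ∧ det2 b c = 1 := by
  set T := convexHull ℝ {x + toR a, x + toR b, x + toR c}
  have hT : Convex ℝ T := convex_convexHull ℝ _
  have ha : x + toR a ∈ T := subset_convexHull ℝ _ (by simp)
  have hb : x + toR b ∈ T := subset_convexHull ℝ _ (by simp)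
  have hc : x + toR c ∈ T := subset_convexHull ℝ _ (by simp)
  have hx : x ∈ T := by
    convert hT.smul_add_smul_add_smul_mem ha hb hc hα.le hβ.le hγ.le hsum using 1
    linear_combination (norm := module) -hbary - hsum • x
  obtain ⟨hcaβ, habγ⟩ := mul_det2_eq_of_smul_add_smul_add_smul hbary
  have hbc' : (0 : ℝ) < det2 b c := by exact_mod_cast hbc
  have hca : 0 < det2 c a := by
    exact_mod_cast pos_of_mul_pos_right (hcaβ ▸ mul_pos hβ hbc') hα.le
  have hab : 0 < det2 a b := by
    exact_mod_cast pos_of_mul_pos_right (habγ ▸ mul_pos hγ hbc') hα.le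
  have h₁ := det2_eq_one_of_convex hT hx hb hc hempty hbc hca
  have h₂ := det2_eq_one_of_convex hT hx hc ha
    (fun w hw => by rcases hempty w hw with h | h | h | h <;> simp [h]) hca hab
  have h₃ := det2_eq_one_of_convex hT hx ha hb
    (fun w hw => by rcases hempty w hw with h | h | h | h <;> simp [h]) hab hbc
  rw [h₁, h₂] at hcaβ
  rw [h₁, h₃] at habγ
  push_cast at hcaβ habγ
  obtain ⟨rfl, rfl, rfl⟩ : α = 1 / 3 ∧ β = 1 / 3 ∧ γ = 1 / 3 := by
    refine ⟨?_, ?_, ?_⟩ <;> linarith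
  refine ⟨rfl, rfl, rfl, toR_injective ?_, h₁⟩
  rw [← smul_add, ← smul_add, ← toR_add, ← toR_add] at hbary
  simpa [toR] using (smul_eq_zero.1 hbary).resolve_left (by norm_num)

lemma collinear_of_cross_eq_zero {p q r : ℝ × ℝ}
    (h : (q.1 - p.1) * (r.2 - p.2) = (q.2 - p.2) * (r.1 - p.1)) : Collinear ℝ {p, q, r} := by
  rw [collinear_iff_of_mem (Set.mem_insert p _)]
  by_cases hq : q = p
  · refine ⟨r - p, ?_⟩
    rintro y (rfl | rfl | rfl)
    exacts [⟨0, by simp⟩, ⟨0, by simp [hq]⟩, ⟨1, by simp⟩]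
  · have hn : (q.1 - p.1) ^ 2 + (q.2 - p.2) ^ 2 ≠ 0 := by
      contrapose! hq
      ext <;> nlinarith [sq_nonneg (q.1 - p.1), sq_nonneg (q.2 - p.2)]
    refine ⟨q - p, ?_⟩
    rintro y (rfl | rfl | rfl)
    · exact ⟨0, by simp⟩
    · exact ⟨1, by simp⟩
    -- `y - p` is its own orthogonal projection onto `q - p`
    refine ⟨((q.1 - p.1) * (y.1 - p.1) + (q.2 - p.2) * (y.2 - p.2)) /
      ((q.1 - p.1) ^ 2 + (q.2 - p.2) ^ 2), ?_⟩
    ext <;> simp only [vadd_eq_add, Prod.fst_add, Prod.snd_add, Prod.smul_fst, Prod.smul_snd,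
      Prod.fst_sub, Prod.snd_sub, smul_eq_mul] <;> field_simp
    · linear_combination -(q.2 - p.2) * h
    · linear_combination (q.1 - p.1) * h

lemma weights_eq_third_and_exists_isParents_perm (x : ℝ × ℝ) {a b c : V} {α β γ : ℝ}
    (hα : 0 < α) (hβ : 0 < β) (hγ : 0 < γ) (hsum : α + β + γ = 1)
    (hx : x = α • (x + toR a) + β • (x + toR b) + γ • (x + toR c))
    (hcol : ¬ Collinear ℝ {x + toR a, x + toR b, x + toR c})
    (hempty : ∀ w : V, x + toR w ∈ convexHull ℝ {x + toR a, x + toR b, x + toR c} →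
      w = a ∨ w = b ∨ w = c ∨ w = 0) :
    α = 1 / 3 ∧ β = 1 / 3 ∧ γ = 1 / 3 ∧
      ∃ e f g : V, IsParents f g e ∧ [e, -f, -g].Perm [a, b, c] := by
  have hbary : α • toR a + β • toR b + γ • toR c = 0 := by
    linear_combination (norm := module) -hx - hsum • x
  have hdet : det2 b c ≠ 0 := by
    intro hbc
    obtain ⟨hca, hab⟩ := mul_det2_eq_of_smul_add_smul_add_smul hbary
    rw [hbc, Int.cast_zero, mul_zero, mul_eq_zero] at hca hab
    have hca' : det2 c a = 0 := by exact_mod_cast hca.resolve_left hα.ne'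
    have hab' : det2 a b = 0 := by exact_mod_cast hab.resolve_left hα.ne'
    have hcross : (b.1 - a.1) * (c.2 - a.2) = (b.2 - a.2) * (c.1 - a.1) := by
      simp only [det2] at hbc hca' hab'
      linear_combination hbc + hca' + hab'
    refine hcol (collinear_of_cross_eq_zero ?_)
    simp only [toR, Prod.fst_add, Prod.snd_add, add_sub_add_left_eq_sub]
    exact_mod_cast hcross
  rcases hdet.lt_or_gt with hcb | hbc
  · obtain ⟨hα', hγ', hβ', habc, hcb⟩ := weights_eq_third_of_det2_pos x hα hγ hβ
      (by linarith) (by rw [← hbary]; abel) (by rwa [det2_swap, neg_pos])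
      (fun w hw => by rw [Set.pair_comm] at hw; rcases hempty w hw with h | h | h | h <;> simp [h])
    obtain ⟨e, f, g, hpar, hperm⟩ := exists_isParents_perm habc hcb
    exact ⟨hα', hβ', hγ', e, f, g, hpar, hperm.trans (.cons a (.swap b c []))⟩
  · obtain ⟨hα', hβ', hγ', habc, hbc⟩ :=
      weights_eq_third_of_det2_pos x hα hβ hγ hsum hbary hbc hempty
    exact ⟨hα', hβ', hγ', exists_isParents_perm habc hbc⟩

/-- Minimal triangle constraints on a grid `X = Ω ∩ ℤ²` have the form
`z + e`, `z - f`, `z - g` with `f, g` the parents of `e`, and weights `1/3`. -/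
theorem triangle_constraint (Ω : Set (ℝ × ℝ)) (hΩ : Convex ℝ Ω)
    (X : Set (ℝ × ℝ)) (hX : X = Ω ∩ {p | ∃ v : V, p = toR v})
    (p q r z : ℝ × ℝ) (hp : p ∈ X) (hq : q ∈ X) (hr : r ∈ X) (hz : z ∈ X)
    (α β γ : ℝ) (hα : 0 < α) (hβ : 0 < β) (hγ : 0 < γ) (hsum : α + β + γ = 1)
    (hzd : z = α • p + β • q + γ • r)
    (hcol : ¬ Collinear ℝ ({p, q, r} : Set (ℝ × ℝ)))
    (hint : convexHull ℝ ({p, q, r} : Set (ℝ × ℝ)) ∩ X = {p, q, r, z}) :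
    α = 1 / 3 ∧ β = 1 / 3 ∧ γ = 1 / 3 ∧
      ∃ p' q' r' : ℝ × ℝ, [p', q', r'].Perm [p, q, r] ∧
        ∃ e f g : V, Irred e ∧ 1 < nsq e ∧ IsParents f g e ∧
          p' = z + toR e ∧ q' = z - toR f ∧ r' = z - toR g := by
  subst hX
  obtain ⟨hpΩ, P, rfl⟩ := hp
  obtain ⟨hqΩ, Q, rfl⟩ := hq
  obtain ⟨hrΩ, R, rfl⟩ := hr
  obtain ⟨-, Z, rfl⟩ := hz
  have htrans (W : V) : toR Z + toR (W - Z) = toR W := by rw [← toR_add, add_sub_cancel]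
  have hhull : convexHull ℝ {toR P, toR Q, toR R} ⊆ Ω :=
    convexHull_min (by simp [Set.insert_subset_iff, hpΩ, hqΩ, hrΩ]) hΩ
  have hempty (w : V) (hw : toR Z + toR w ∈
      convexHull ℝ {toR Z + toR (P - Z), toR Z + toR (Q - Z), toR Z + toR (R - Z)}) :
      w = P - Z ∨ w = Q - Z ∨ w = R - Z ∨ w = 0 := by
    rw [htrans, htrans, htrans, ← toR_add] at hw
    rw [eq_sub_iff_add_eq', eq_sub_iff_add_eq', eq_sub_iff_add_eq', ← add_eq_left (a := Z)]
    simpa only [Set.mem_insert_iff, Set.mem_singleton_iff, toR_injective.eq_iff] using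
      hint.subset ⟨hw, hhull hw, _, rfl⟩
  obtain ⟨rfl, rfl, rfl, e, f, g, hpar, hperm⟩ :=
    weights_eq_third_and_exists_isParents_perm (toR Z) hα hβ hγ hsum
      (by simpa only [htrans] using hzd) (by simpa only [htrans] using hcol) hempty
  refine ⟨rfl, rfl, rfl, _, _, _, ?_, e, f, g, hpar.irred, hpar.one_lt_nsq, hpar, rfl, rfl, rfl⟩
  simpa [toR_neg, ← sub_eq_add_neg, htrans] using hperm.map (fun w => toR Z + toR w)
end
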